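/- arXiv:1704.02947 — 3 statements merged into one kernel-verified Lean document; each statement's English description precedes it below -/
import Mathlib

section
/- Let (j1,j2,j3) be an admissible triple and a,b ∈ {-1,+1}. Then the coefficient C_{a,b}(j1,j2,j3) is nonzero if and only if the triple (j1+a, j2+b, j3) is admissible. Here C_{a,b}(j1,j2,j3) = a·b·([ (a j1 + b j2 + j3)/2, (a+b+2)/2 ]·[ (a j1 + b j2 - j3)/2, (a+b)/2 ]·[j1-1,2]·[j2-1,2]) / ([j1,(a+3)/2]·[j1-1,(a+3)/2]·[j2,(a+3)/2]·[j2-1,(a+3)/2]), where [n,m] = (q^{n/2} t^{m/2} - q^{-n/2} t^{-m/2})/(q^{1/2} - q^{-1/2}), working in the field of rational functions in q^{1/4}, t^{1/4} over ℂ (with q, t generic so that none of the bracket factors appearing in the denominator vanish). -/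
/-- A triple of integers `(j1,j2,j3)` is admissible if each is nonnegative,
`|j1 - j2| ≤ j3 ≤ j1 + j2`, and `j1 + j2 + j3` is even. -/
def Admissible (j1 j2 j3 : ℤ) : Prop :=
  0 ≤ j1 ∧ 0 ≤ j2 ∧ 0 ≤ j3 ∧ |j1 - j2| ≤ j3 ∧ j3 ≤ j1 + j2 ∧ Even (j1 + j2 + j3)

/-- The bracket `[n,m]_{q,t} = (q^{n/2} t^{m/2} - q^{-n/2} t^{-m/2})/(q^{1/2} - q^{-1/2})`,
expressed via the quarter roots `q4 = q^{1/4}`, `t4 = t^{1/4}`. -/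
noncomputable def br {K : Type*} [Field K] (q4 t4 : K) (n m : ℤ) : K :=
  (q4 ^ (2 * n) * t4 ^ (2 * m) - q4 ^ (-(2 * n)) * t4 ^ (-(2 * m))) /
    (q4 ^ (2 : ℤ) - q4 ^ (-2 : ℤ))

/-- The genus-two Pieri coefficient `C_{a,b}(j1,j2,j3)`. -/
noncomputable def Cc {K : Type*} [Field K] (q4 t4 : K) (a b j1 j2 j3 : ℤ) : K :=
  ((a * b : ℤ) : K) *
    (br q4 t4 ((a * j1 + b * j2 + j3) / 2) ((a + b + 2) / 2) *
      br q4 t4 ((a * j1 + b * j2 - j3) / 2) ((a + b) / 2) *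
      br q4 t4 (j1 - 1) 2 * br q4 t4 (j2 - 1) 2) /
    (br q4 t4 j1 ((a + 3) / 2) * br q4 t4 (j1 - 1) ((a + 3) / 2) *
      br q4 t4 j2 ((a + 3) / 2) * br q4 t4 (j2 - 1) ((a + 3) / 2))

/-! For generic `q, t` a bracket `[n, m]` vanishes only at `n = m = 0`. The denominator of
`C_{a,b}` and the factors `[j - 1, 2]` therefore never vanish, and `C_{a,b}` vanishes exactly
when one of the two remaining brackets has both arguments zero. Since `a j1 + b j2 ± j3` is even,
this happens iff `a = b = -1` and `j3 = j1 + j2`, or `a = -b` and `j3 = a j1 + b j2`, which are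
precisely the cases where shifting `(j1, j2)` by `(a, b)` breaks one of the triangle
inequalities. -/

section Bracket

variable {K : Type*} [Field K] {q4 t4 : K}

theorem br_ne_zero_iff (hgen : ∀ n m : ℤ, br q4 t4 n m = 0 ↔ n = 0 ∧ m = 0) (n m : ℤ) :
    br q4 t4 n m ≠ 0 ↔ n ≠ 0 ∨ m ≠ 0 := by
  rw [ne_eq, hgen, not_and_or]

theorem Cc_ne_zero_iff (hgen : ∀ n m : ℤ, br q4 t4 n m = 0 ↔ n = 0 ∧ m = 0)
    {a b : ℤ} (hab : ((a * b : ℤ) : K) ≠ 0) (ha3 : (a + 3) / 2 ≠ 0) (j1 j2 j3 : ℤ) :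
    Cc q4 t4 a b j1 j2 j3 ≠ 0 ↔
      ((a * j1 + b * j2 + j3) / 2 ≠ 0 ∨ (a + b + 2) / 2 ≠ 0) ∧
        ((a * j1 + b * j2 - j3) / 2 ≠ 0 ∨ (a + b) / 2 ≠ 0) := by
  simp only [Cc, div_ne_zero_iff, mul_ne_zero_iff, br_ne_zero_iff hgen, ne_eq, hab,
    (two_ne_zero : (2 : ℤ) ≠ 0), ha3, not_false_eq_true, or_true, and_true, true_and]

end Bracket

theorem admissible_shift_iff {j1 j2 j3 a b : ℤ} (hadm : Admissible j1 j2 j3)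
    (ha : a = -1 ∨ a = 1) (hb : b = -1 ∨ b = 1) :
    Admissible (j1 + a) (j2 + b) j3 ↔
      ((a * j1 + b * j2 + j3) / 2 ≠ 0 ∨ (a + b + 2) / 2 ≠ 0) ∧
        ((a * j1 + b * j2 - j3) / 2 ≠ 0 ∨ (a + b) / 2 ≠ 0) := by
  obtain ⟨h1, h2, h3, h4, h5, h6⟩ := hadm
  rw [abs_sub_le_iff] at h4
  rw [Int.even_iff] at h6
  simp only [Admissible, abs_sub_le_iff, Int.even_iff]
  rcases ha with rfl | rfl <;> rcases hb with rfl | rfl <;> omega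

theorem Cc_ne_zero_iff_admissible_general {K : Type*} [Field K] (q4 t4 : K)
    (hgen : ∀ n m : ℤ, br q4 t4 n m = 0 ↔ n = 0 ∧ m = 0)
    (j1 j2 j3 a b : ℤ) (hadm : Admissible j1 j2 j3)
    (ha : a = -1 ∨ a = 1) (hb : b = -1 ∨ b = 1) :
    Cc q4 t4 a b j1 j2 j3 ≠ 0 ↔ Admissible (j1 + a) (j2 + b) j3 := by
  have hab : ((a * b : ℤ) : K) ≠ 0 :=
    (((Int.isUnit_iff.mpr ha.symm).mul (Int.isUnit_iff.mpr hb.symm)).map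
      (Int.castRingHom K)).ne_zero
  rw [Cc_ne_zero_iff hgen hab (by omega), admissible_shift_iff hadm ha hb]

/-- For generic `q,t` (encoded by the bracket vanishing exactly at `n = m = 0`),
the Pieri coefficient `C_{a,b}(j1,j2,j3)` is nonzero iff `(j1+a, j2+b, j3)` is admissible. -/
theorem Cc_ne_zero_iff_admissible {K : Type*} [Field K] (q4 t4 : K)
    (hq4 : q4 ≠ 0) (ht4 : t4 ≠ 0)
    (hgen : ∀ n m : ℤ, br q4 t4 n m = 0 ↔ n = 0 ∧ m = 0)
    (j1 j2 j3 a b : ℤ) (hadm : Admissible j1 j2 j3)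
    (ha : a = -1 ∨ a = 1) (hb : b = -1 ∨ b = 1) :
    Cc q4 t4 a b j1 j2 j3 ≠ 0 ↔ Admissible (j1 + a) (j2 + b) j3 :=
  Cc_ne_zero_iff_admissible_general q4 t4 hgen j1 j2 j3 a b hadm ha hb
end

section
/- For an admissible triple of the form (ℓ, ℓ, 0) with ℓ ≥ 0, the genus-two Pieri rule in the variable x12 reduces to: (x12 + x12^{-1})·Ψ_{ℓ,ℓ,0} = t^{1/2}·(1 - q^ℓ t)/(1 - q^ℓ t^2)·Ψ_{ℓ+1,ℓ+1,0} + t^{-1/2}·(1 - q^ℓ)(1 - q^{ℓ-1} t^2)^2/((1 - q^ℓ t)(1 - q^{ℓ-1} t)^2)·Ψ_{ℓ-1,ℓ-1,0}. Equivalently, in terms of the coefficients: C_{+1,+1}(ℓ,ℓ,0) = t^{1/2}(1 - q^ℓ t)/(1 - q^ℓ t^2), C_{-1,-1}(ℓ,ℓ,0) = t^{-1/2}(1-q^ℓ)(1-q^{ℓ-1}t^2)^2/((1-q^ℓ t)(1-q^{ℓ-1}t)^2), and C_{+1,-1}(ℓ,ℓ,0) = C_{-1,+1}(ℓ,ℓ,0)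 = 0. -/
section
variable {K : Type*} [Field K]

theorem sub_inv_div_sub_inv {u v : K} (hu : u ≠ 0) (hv : v ≠ 0) :
    (u - u⁻¹) / (v - v⁻¹) = v * (1 - u ^ 2) / (u * (1 - v ^ 2)) := by
  field_simp
  rw [← neg_div_neg_eq, neg_sub, neg_sub]

theorem br_neg (q4 t4 : K) (n m : ℤ) : br q4 t4 (-n) (-m) = -br q4 t4 n m := by
  simp only [br, mul_neg, neg_neg, ← neg_div, neg_sub]

theorem br_div_br {q4 t4 : K} (hq4 : q4 ≠ 0) (ht4 : t4 ≠ 0)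
    (hD : q4 ^ (2 : ℤ) - q4 ^ (-2 : ℤ) ≠ 0) (n m m' : ℤ) :
    br q4 t4 n m / br q4 t4 n m' =
      t4 ^ (2 * (m' - m)) * (1 - q4 ^ (4 * n) * t4 ^ (4 * m)) /
        (1 - q4 ^ (4 * n) * t4 ^ (4 * m')) := by
  have hsq (k l : ℤ) : (q4 ^ (2 * k) * t4 ^ (2 * l)) ^ 2 = q4 ^ (4 * k) * t4 ^ (4 * l) := by
    rw [mul_pow, ← zpow_natCast, ← zpow_natCast, ← zpow_mul, ← zpow_mul]
    ring_nf
  have hne (k l : ℤ) : q4 ^ (2 * k) * t4 ^ (2 * l) ≠ 0 :=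
    mul_ne_zero (zpow_ne_zero _ hq4) (zpow_ne_zero _ ht4)
  rw [br, br, div_div_div_cancel_right₀ hD]
  simp only [zpow_neg, ← mul_inv]
  rw [sub_inv_div_sub_inv (hne n m) (hne n m'), hsq, hsq, mul_sub (2 : ℤ) m' m, zpow_sub₀ ht4]
  field_simp

theorem Cc_neg_diag_eq_zero (q4 t4 : K) (a j : ℤ) : Cc q4 t4 a (-a) j j 0 = 0 := by
  simp [Cc, br]

theorem Cc_one_one_diag_eq {q4 t4 : K} (j : ℤ) (h : br q4 t4 (j - 1) 2 ≠ 0) :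
    Cc q4 t4 1 1 j j 0 = br q4 t4 j 1 / br q4 t4 j 2 := by
  have hj : (1 * j + 1 * j + 0) / 2 = j ∧ (1 * j + 1 * j - 0) / 2 = j := by omega
  rw [Cc, hj.1, hj.2]
  norm_num
  field_simp

theorem Cc_neg_one_neg_one_diag_eq {q4 t4 : K} (j : ℤ) (h : br q4 t4 j 1 ≠ 0) :
    Cc q4 t4 (-1) (-1) j j 0 =
      br q4 t4 j 0 / br q4 t4 j 1 * (br q4 t4 (j - 1) 2 / br q4 t4 (j - 1) 1) ^ 2 := by
  have hj : (-1 * j + -1 * j + 0) / 2 = -j ∧ (-1 * j + -1 * j - 0) / 2 = -j := by omega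
  rw [Cc, hj.1, hj.2]
  norm_num
  rw [show (0 : ℤ) = -0 from rfl, br_neg, br_neg, neg_zero]
  field_simp

end

theorem pieri_at_diagonal_general {K : Type*} [Field K] (q4 t4 : K)
    (hq4 : q4 ≠ 0) (ht4 : t4 ≠ 0)
    (hgen : ∀ n m : ℤ, br q4 t4 n m = 0 ↔ n = 0 ∧ m = 0)
    (ℓ : ℤ) :
    Cc q4 t4 1 1 ℓ ℓ 0
        = t4 ^ 2 * (1 - q4 ^ (4 * ℓ) * t4 ^ 4) / (1 - q4 ^ (4 * ℓ) * t4 ^ 8) ∧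
      Cc q4 t4 (-1) (-1) ℓ ℓ 0
        = t4 ^ (-2 : ℤ) * ((1 - q4 ^ (4 * ℓ)) * (1 - q4 ^ (4 * ℓ - 4) * t4 ^ 8) ^ 2) /
            ((1 - q4 ^ (4 * ℓ) * t4 ^ 4) * (1 - q4 ^ (4 * ℓ - 4) * t4 ^ 4) ^ 2) ∧
      Cc q4 t4 1 (-1) ℓ ℓ 0 = 0 ∧
      Cc q4 t4 (-1) 1 ℓ ℓ 0 = 0 := by
  have hbr (n m : ℤ) (h : m ≠ 0) : br q4 t4 n m ≠ 0 := by
    rw [Ne, hgen]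
    exact fun h' => h h'.2
  have hD : q4 ^ (2 : ℤ) - q4 ^ (-2 : ℤ) ≠ 0 := by
    have h10 : br q4 t4 1 0 ≠ 0 := by rw [Ne, hgen]; simp
    contrapose! h10
    rw [br, h10, div_zero]
  refine ⟨?_, ?_, Cc_neg_diag_eq_zero q4 t4 1 ℓ, by simpa using Cc_neg_diag_eq_zero q4 t4 (-1) ℓ⟩
  · rw [Cc_one_one_diag_eq ℓ (hbr _ 2 two_ne_zero), br_div_br hq4 ht4 hD]
    norm_num
  · rw [Cc_neg_one_neg_one_diag_eq ℓ (hbr ℓ 1 one_ne_zero), br_div_br hq4 ht4 hD,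
      br_div_br hq4 ht4 hD, show 4 * (ℓ - 1) = 4 * ℓ - 4 by ring]
    norm_num
    field_simp

/-- Specialization of the genus-two Pieri coefficients at `(ℓ,ℓ,0)`:
`C_{+1,+1} = t^{1/2}(1-q^ℓ t)/(1-q^ℓ t²)`,
`C_{-1,-1} = t^{-1/2}(1-q^ℓ)(1-q^{ℓ-1}t²)²/((1-q^ℓ t)(1-q^{ℓ-1}t)²)`, and
`C_{+1,-1} = C_{-1,+1} = 0`.  Here `q = q4^4`, `t = t4^4`. -/
theorem pieri_at_diagonal {K : Type*} [Field K] (q4 t4 : K)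
    (hq4 : q4 ≠ 0) (ht4 : t4 ≠ 0)
    (hgen : ∀ n m : ℤ, br q4 t4 n m = 0 ↔ n = 0 ∧ m = 0)
    (ℓ : ℤ) (hℓ : 0 ≤ ℓ) :
    Cc q4 t4 1 1 ℓ ℓ 0
        = t4 ^ 2 * (1 - q4 ^ (4 * ℓ) * t4 ^ 4) / (1 - q4 ^ (4 * ℓ) * t4 ^ 8) ∧
      Cc q4 t4 (-1) (-1) ℓ ℓ 0
        = t4 ^ (-2 : ℤ) * ((1 - q4 ^ (4 * ℓ)) * (1 - q4 ^ (4 * ℓ - 4) * t4 ^ 8) ^ 2) /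
            ((1 - q4 ^ (4 * ℓ) * t4 ^ 4) * (1 - q4 ^ (4 * ℓ - 4) * t4 ^ 4) ^ 2) ∧
      Cc q4 t4 1 (-1) ℓ ℓ 0 = 0 ∧
      Cc q4 t4 (-1) 1 ℓ ℓ 0 = 0 :=
  pieri_at_diagonal_general q4 t4 hq4 ht4 hgen ℓ
end

section
/- With Ô_A, Ô_B as in the A1 spherical DAHA polynomial representation, the relation (q^{1/2} - q^{-1/2})^2 Ô_A = −Ô_B Ô_B Ô_A + (q^{1/2} + q^{-1/2}) Ô_B Ô_A Ô_B − Ô_A Ô_B Ô_B holds as operators on k(x). -/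
/-- The `A₁` Macdonald difference operator `Ô_A` of the polynomial representation of
spherical DAHA, acting on a field `F` of "functions of `x`" equipped with the shift
automorphism `σ : f(x) ↦ f(q^{1/2} x)`. -/
noncomputable def OA {F : Type*} [Field F] (σ : F ≃+* F) (x t : F) (f : F) : F :=
  (x⁻¹ - t * x) / (x⁻¹ - x) * σ f + (x - t * x⁻¹) / (x - x⁻¹) * σ.symm f

/-- The multiplication operator `Ô_B : f ↦ (x + x⁻¹) f`. -/
noncomputable def OB {F : Type*} [Field F] (x : F) (f : F) : F := (x + x⁻¹) * f

/-!
Each summand of `Ô_A` has the form `f ↦ c · τ f`, where the ring automorphism `τ = σ^{±1}`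
sends `b = x + x⁻¹` to `b' = y + y⁻¹` with `y = Q^{±1} x`, `Q = q^{1/2}`. For such an operator
the relation reduces to the scalar identity `b'² - (Q + Q⁻¹) b b' + b² + (Q - Q⁻¹)² = 0`:
`Qx + (Qx)⁻¹` and `Q⁻¹x + (Q⁻¹x)⁻¹` are the two roots of this quadratic in `b'`, their sum being
`(Q + Q⁻¹) b` and their product `x² + x⁻² + Q² + Q⁻² = b² + (Q - Q⁻¹)²`.
-/

theorem add_inv_shift_quadratic_eq_zero {K : Type*} [Field K] {q x : K} (hq : q ≠ 0)
    (hx : x ≠ 0) :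
    (q - q⁻¹) ^ 2 + (x + x⁻¹) ^ 2 - (q + q⁻¹) * (x + x⁻¹) * (q * x + (q * x)⁻¹)
      + (q * x + (q * x)⁻¹) ^ 2 = 0 := by
  field_simp
  ring

theorem twisted_mul_serre_relation {R G : Type*} [CommRing R] [FunLike G R R]
    [RingHomClass G R R] (τ : G) {b s d : R} (h : d + b ^ 2 - s * b * τ b + τ b ^ 2 = 0)
    (c f : R) :
    d * (c * τ f)
      = -(b * (b * (c * τ f))) + s * (b * (c * τ (b * f))) - c * τ (b * (b * f)) := by
  simp only [map_mul]
  linear_combination (c * τ f) * h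

theorem daha_relation_BAB_general {F : Type*} [Field F] (σ : F ≃+* F) (x q2 t : F)
    (hσx : σ x = q2 * x) (hσq : σ q2 = q2)
    (hx : x ≠ 0) (hq2 : q2 ≠ 0) :
    ∀ f : F,
      (q2 - q2⁻¹) ^ 2 * OA σ x t f
        = -(OB x (OB x (OA σ x t f)))
          + (q2 + q2⁻¹) * OB x (OA σ x t (OB x f))
          - OA σ x t (OB x (OB x f)) := by
  intro f
  have hσ_symm_x : σ.symm x = q2⁻¹ * x := by
    rw [RingEquiv.symm_apply_eq, map_mul, map_inv₀, hσq, hσx, inv_mul_cancel_left₀ hq2]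
  have hup := twisted_mul_serre_relation σ (b := x + x⁻¹) (s := q2 + q2⁻¹) (d := (q2 - q2⁻¹) ^ 2)
    (by rw [map_add, map_inv₀, hσx]; exact add_inv_shift_quadratic_eq_zero hq2 hx)
    ((x⁻¹ - t * x) / (x⁻¹ - x)) f
  have hdown := twisted_mul_serre_relation σ.symm (b := x + x⁻¹) (s := q2⁻¹ + q2)
    (d := (q2⁻¹ - q2) ^ 2)
    (by rw [map_add, map_inv₀, hσ_symm_x]
        simpa only [inv_inv] using add_inv_shift_quadratic_eq_zero (inv_ne_zero hq2) hx)
    ((x - t * x⁻¹) / (x - x⁻¹)) f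
  unfold OA OB
  linear_combination hup + hdown

/-- The q-deformed Serre-type relation
`(q^{1/2}-q^{-1/2})² Ô_A = -Ô_B Ô_B Ô_A + (q^{1/2}+q^{-1/2}) Ô_B Ô_A Ô_B - Ô_A Ô_B Ô_B`
of `A₁` spherical DAHA, as operators on the function field. -/
theorem daha_relation_BAB {F : Type*} [Field F] (σ : F ≃+* F) (x q2 t : F)
    (hσx : σ x = q2 * x) (hσq : σ q2 = q2) (hσt : σ t = t)
    (hx : x ≠ 0) (hq2 : q2 ≠ 0) (hx1 : x ^ 2 ≠ 1) :
    ∀ f : F,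
      (q2 - q2⁻¹) ^ 2 * OA σ x t f
        = -(OB x (OB x (OA σ x t f)))
          + (q2 + q2⁻¹) * OB x (OA σ x t (OB x f))
          - OA σ x t (OB x (OB x f)) :=
  daha_relation_BAB_general σ x q2 t hσx hσq hx hq2
end
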